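/- Asymptotic inverse expansion (Regime II): Suppose φ(s) = sε + ½s² + K₁s^{η₁} + o(s^{η₁}) with 2 < η₁ ≤ 3. Then the inverse ψ satisfies, for each fixed s > 0 and γ > 1, ψ(sε²(γ-1)) = -ε + ε√(1 + 2s(γ-1)) + o(ε) as ε ↓ 0. -/

import Mathlib

/-! Write `a = s (γ - 1)` and `E = K₁ ψ^η₁ + R ψ`, so that `E = o(ψ²)` because `η₁ > 2`.
Since `ψ ≥ 0`, the equation `ψ ε + ψ² / 2 + E = a ε²` gives `ψ² / 2 ≤ a ε² - E`, hence
`ψ = O(ε)` and `E = o(ε²)`. Dividing the equation by `ε²` then shows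
`(ψ / ε + 1)² → 1 + 2a`, i.e. `ψ / ε + 1 → √(1 + 2a)`. -/

open Real Filter Topology Asymptotics

theorem rpow_isLittleO_sq_nhdsGT_zero {η : ℝ} (hη : 2 < η) :
    (fun x : ℝ => x ^ η) =o[𝓝[>] 0] fun x => x ^ 2 := by
  refine (isLittleO_iff_tendsto' ?_).2 ?_
  · filter_upwards [self_mem_nhdsWithin] with x hx h
    exact absurd h (pow_ne_zero 2 (ne_of_gt hx))
  · have hlim : Tendsto (fun x : ℝ => x ^ (η - 2)) (𝓝[>] 0) (𝓝 0) := by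
      have := (continuousAt_rpow_const 0 (η - 2) (Or.inr (by linarith))).tendsto
      rw [zero_rpow (by linarith)] at this
      exact this.mono_left nhdsWithin_le_nhds
    refine hlim.congr' ?_
    filter_upwards [self_mem_nhdsWithin] with x (hx : 0 < x)
    rw [rpow_sub hx, rpow_two]

theorem eventually_mul_sq_ne {a : ℝ} (ha : a ≠ 0) (b : ℝ) :
    ∀ᶠ ε in 𝓝[>] (0 : ℝ), a * ε ^ 2 ≠ b := by
  rcases eq_or_ne b 0 with rfl | hb
  · filter_upwards [self_mem_nhdsWithin] with ε (hε : 0 < ε)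
    positivity
  · have hlim : Tendsto (fun ε : ℝ => a * ε ^ 2) (𝓝[>] 0) (𝓝 0) := by
      refine tendsto_nhdsWithin_of_tendsto_nhds ?_
      simpa using ((continuous_pow 2).tendsto (0 : ℝ)).const_mul a
    exact hlim.eventually (eventually_ne_nhds hb.symm)

theorem isLittleO_sub_mul_of_tendsto_div {l : Filter ℝ} {f : ℝ → ℝ} {c : ℝ}
    (hl : ∀ᶠ x in l, x ≠ 0) (hf : Tendsto (fun x => f x / x) l (𝓝 c)) :
    (fun x => f x - c * x) =o[l] fun x => x := by
  refine (isLittleO_iff_tendsto' (hl.mono fun x hx h => absurd h hx)).2 ?_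
  simpa using (hf.sub_const c).congr' (hl.mono fun x hx => by field_simp)

section
variable {g u : ℝ → ℝ} {a : ℝ}

theorem sq_isBigO_sq_of_quadratic_eq (hg : g =o[𝓝[>] 0] fun x => x ^ 2)
    (hu : Tendsto u (𝓝[>] 0) (𝓝[>] 0))
    (heq : ∀ᶠ ε in 𝓝[>] 0, u ε * ε + u ε ^ 2 / 2 + g (u ε) = a * ε ^ 2) :
    (fun ε => u ε ^ 2) =O[𝓝[>] 0] fun ε => ε ^ 2 := by
  have hsmall : ∀ᶠ ε in 𝓝[>] (0 : ℝ), |g (u ε)| ≤ u ε ^ 2 / 4 := by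
    filter_upwards [hu.eventually (hg.def (by norm_num : (0 : ℝ) < 1 / 4))] with ε hε
    simpa [Real.norm_eq_abs, div_eq_inv_mul] using hε
  refine IsBigO.of_bound (4 * a) ?_
  filter_upwards [heq, hsmall, self_mem_nhdsWithin, hu.eventually self_mem_nhdsWithin]
    with ε hε hgε (hε0 : 0 < ε) (huε : 0 < u ε)
  rw [Real.norm_of_nonneg (sq_nonneg _), Real.norm_of_nonneg (sq_nonneg _)]
  nlinarith [neg_abs_le (g (u ε)), mul_pos huε hε0]

theorem tendsto_div_of_quadratic_eq (hg : g =o[𝓝[>] 0] fun x => x ^ 2)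
    (hu : Tendsto u (𝓝[>] 0) (𝓝[>] 0))
    (heq : ∀ᶠ ε in 𝓝[>] 0, u ε * ε + u ε ^ 2 / 2 + g (u ε) = a * ε ^ 2) :
    Tendsto (fun ε => (u ε + ε) / ε) (𝓝[>] 0) (𝓝 (√(1 + 2 * a))) := by
  have hgε : Tendsto (fun ε => g (u ε) / ε ^ 2) (𝓝[>] 0) (𝓝 0) :=
    ((hg.comp_tendsto hu).trans_isBigO
      (sq_isBigO_sq_of_quadratic_eq hg hu heq)).tendsto_div_nhds_zero
  have hsq : Tendsto (fun ε => ((u ε + ε) / ε) ^ 2) (𝓝[>] 0) (𝓝 (1 + 2 * a)) := by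
    have hlim : Tendsto (fun ε => 1 + 2 * a - 2 * (g (u ε) / ε ^ 2)) (𝓝[>] 0)
        (𝓝 (1 + 2 * a)) := by
      simpa using (hgε.const_mul 2).const_sub (1 + 2 * a)
    refine hlim.congr' ?_
    filter_upwards [heq, self_mem_nhdsWithin] with ε hε (hε0 : 0 < ε)
    field_simp
    linear_combination -2 * hε
  refine ((continuous_sqrt.tendsto _).comp hsq).congr' ?_
  filter_upwards [self_mem_nhdsWithin, hu.eventually self_mem_nhdsWithin]
    with ε (hε0 : 0 < ε) (huε : 0 < u ε)
  exact sqrt_sq (by positivity)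

end

theorem stmt_10_general (γ K₁ η₁ : ℝ) (hγ : 1 < γ) (hη : 2 < η₁)
    (R : ℝ → ℝ) (hR : R =o[𝓝[>] (0:ℝ)] fun x => x ^ η₁)
    (φ : ℝ → ℝ → ℝ)
    (hφ : ∀ ε x : ℝ, φ ε x = x*ε + x^2/2 + K₁ * x ^ η₁ + R x)
    (ψ : ℝ → ℝ → ℝ)
    (s : ℝ) (hs : 0 < s)
    (hψ : ∀ᶠ ε in 𝓝[>] (0:ℝ), φ ε (ψ ε (s*ε^2*(γ-1))) = s*ε^2*(γ-1) ∧
      0 ≤ ψ ε (s*ε^2*(γ-1)))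
    (hψ0 : Tendsto (fun ε : ℝ => ψ ε (s*ε^2*(γ-1))) (𝓝[>] 0) (𝓝 0)) :
    (fun ε : ℝ => ψ ε (s*ε^2*(γ-1)) - (-ε + ε * Real.sqrt (1 + 2*s*(γ-1)))) =o[𝓝[>] 0]
      fun ε => ε := by
  set u := fun ε : ℝ => ψ ε (s * ε ^ 2 * (γ - 1))
  have ha : s * (γ - 1) ≠ 0 := (mul_pos hs (by linarith)).ne'
  have hg : (fun x => K₁ * x ^ η₁ + R x) =o[𝓝[>] 0] fun x => x ^ 2 :=
    ((rpow_isLittleO_sq_nhdsGT_zero hη).const_mul_left K₁).add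
      (hR.trans (rpow_isLittleO_sq_nhdsGT_zero hη))
  have heq : ∀ᶠ ε in 𝓝[>] 0,
      u ε * ε + u ε ^ 2 / 2 + (K₁ * u ε ^ η₁ + R (u ε)) = s * (γ - 1) * ε ^ 2 := by
    filter_upwards [hψ] with ε hε
    linear_combination (hφ ε (u ε)).symm.trans hε.1
  -- `R` is controlled only on `(0, ∞)`; at `u ε = 0` the equation would read `R 0 = s (γ - 1) ε²`.
  have hpos : ∀ᶠ ε in 𝓝[>] 0, 0 < u ε := by
    filter_upwards [hψ, heq, eventually_mul_sq_ne ha (R 0)] with ε hε hεeq hne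
    refine hε.2.lt_of_ne fun h0 => hne ?_
    rw [show u ε = 0 from h0.symm, zero_rpow (by linarith)] at hεeq
    linarith
  have hlim := tendsto_div_of_quadratic_eq hg (tendsto_nhdsWithin_iff.2 ⟨hψ0, hpos⟩) heq
  rw [← mul_assoc] at hlim
  refine (isLittleO_sub_mul_of_tendsto_div (eventually_mem_nhdsWithin.mono
    fun ε hε => ne_of_gt hε) hlim).congr_left fun ε => by ring

/-- Regime II inverse expansion: if φ_ε(x) = xε + ½x² + K₁x^{η₁} + o(x^{η₁})
with 2 < η₁ ≤ 3, then the inverse ψ_ε satisfies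
ψ_ε(sε²(γ-1)) = -ε + ε√(1+2s(γ-1)) + o(ε) as ε ↓ 0, for fixed s > 0 and γ > 1. -/
theorem stmt_10 (γ K₁ η₁ : ℝ) (hγ : 1 < γ) (hη : 2 < η₁) (hη' : η₁ ≤ 3)
    (R : ℝ → ℝ) (hR : R =o[𝓝[>] (0:ℝ)] fun x => x ^ η₁)
    (φ : ℝ → ℝ → ℝ)
    (hφ : ∀ ε x : ℝ, φ ε x = x*ε + x^2/2 + K₁ * x ^ η₁ + R x)
    (ψ : ℝ → ℝ → ℝ)
    (s : ℝ) (hs : 0 < s)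
    (hψ : ∀ᶠ ε in 𝓝[>] (0:ℝ), φ ε (ψ ε (s*ε^2*(γ-1))) = s*ε^2*(γ-1) ∧
      0 ≤ ψ ε (s*ε^2*(γ-1)))
    (hψ0 : Tendsto (fun ε : ℝ => ψ ε (s*ε^2*(γ-1))) (𝓝[>] 0) (𝓝 0)) :
    (fun ε : ℝ => ψ ε (s*ε^2*(γ-1)) - (-ε + ε * Real.sqrt (1 + 2*s*(γ-1)))) =o[𝓝[>] 0]
      fun ε => ε :=
  stmt_10_general γ K₁ η₁ hγ hη R hR φ hφ ψ s hs hψ hψ0
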